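/- arXiv:1701.05144 — 2 statements merged into one kernel-verified Lean document; each statement's English description precedes it below -/
import Mathlib

section
/- For every n ≥ 4, an n-vertex stacked 2-sphere contains exactly n−4 induced 3-cycles, i.e., exactly n−4 three-cycles of its edge graph that do not bound a triangle of the sphere. -/
namespace PachnerSpheres

open Finset

/-- A triangulated 2-sphere on the vertex set `Fin n`, given by its set of
triangles: a pure 2-dimensional complex in which every edge lies in exactly two
triangles, all vertex links are connected (hence cycles), the complex is
connected, and the Euler characteristic is 2. -/
structure Sphere2 (n : ℕ) where
  faces : Finset (Finset (Fin n))
  card_three : ∀ t ∈ faces, t.card = 3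
  covers : ∀ v : Fin n, ∃ t ∈ faces, v ∈ t
  edge_two : ∀ t ∈ faces, ∀ e ⊆ t, e.card = 2 →
    (faces.filter fun t' => e ⊆ t').card = 2
  link_conn : ∀ v a b : Fin n,
    (∃ t ∈ faces, v ∈ t ∧ a ∈ t ∧ a ≠ v) →
    (∃ t ∈ faces, v ∈ t ∧ b ∈ t ∧ b ≠ v) →
    Relation.ReflTransGen
      (fun x y : Fin n => x ≠ y ∧ ({v, x, y} : Finset (Fin n)) ∈ faces) a b
  conn : ∀ a b : Fin n,
    Relation.ReflTransGen
      (fun x y : Fin n => x ≠ y ∧ ∃ t ∈ faces, x ∈ t ∧ y ∈ t) a b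
  euler : n + faces.card = (faces.biUnion fun t => t.powersetCard 2).card + 2

variable {n : ℕ}

namespace Sphere2

/-- The edges of a triangulated 2-sphere. -/
def edges (S : Sphere2 n) : Finset (Finset (Fin n)) :=
  S.faces.biUnion fun t => t.powersetCard 2

/-- `u` and `v` are joined by an edge of `S`. -/
def HasEdge (S : Sphere2 n) (u v : Fin n) : Prop :=
  u ≠ v ∧ ({u, v} : Finset (Fin n)) ∈ S.edges

instance (S : Sphere2 n) : DecidableRel S.HasEdge := fun u v =>
  decidable_of_iff (u ≠ v ∧ ({u, v} : Finset (Fin n)) ∈ S.edges) Iff.rfl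

/-- The degree of a vertex: the number of edges containing it. -/
def degree (S : Sphere2 n) (v : Fin n) : ℕ :=
  (S.edges.filter fun e => v ∈ e).card

/-- Combinatorial isomorphism of triangulated 2-spheres. -/
def Iso (S T : Sphere2 n) : Prop :=
  ∃ σ : Equiv.Perm (Fin n), T.faces = S.faces.image (Finset.image σ)

end Sphere2

/-- The face set obtained from `F` by the edge flip `ab ↦ cd`. -/
def flipFaces (F : Finset (Finset (Fin n))) (a b c d : Fin n) :
    Finset (Finset (Fin n)) :=
  (F \ {{a, b, c}, {a, b, d}}) ∪ {{a, c, d}, {b, c, d}}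

/-- `IsFlipOf S T a b c d` : `T` is obtained from `S` by the (admissible)
edge flip `ab ↦ cd`. -/
def IsFlipOf (S T : Sphere2 n) (a b c d : Fin n) : Prop :=
  c ≠ d ∧ ({a, b, c} : Finset (Fin n)) ∈ S.faces ∧
    ({a, b, d} : Finset (Fin n)) ∈ S.faces ∧ ¬ S.HasEdge c d ∧
    T.faces = flipFaces S.faces a b c d

/-- `T` is obtained from `S` by a single edge flip. -/
def Flip (S T : Sphere2 n) : Prop := ∃ a b c d : Fin n, IsFlipOf S T a b c d

/-- A flag 2-sphere: distinct from the boundary of the tetrahedron (which is the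
only triangulated 2-sphere with at most 4 vertices) and every 3-cycle of the
edge graph bounds a triangle. -/
def IsFlag (S : Sphere2 n) : Prop :=
  4 < n ∧ ∀ a b c : Fin n, S.HasEdge a b → S.HasEdge b c → S.HasEdge a c →
    ({a, b, c} : Finset (Fin n)) ∈ S.faces

/-- `S` is (isomorphic to) the double cone `Γ_n`: there are two non-adjacent
vertices such that every triangle contains one of them. -/
def IsDoubleCone (S : Sphere2 n) : Prop :=
  ∃ v w : Fin n, v ≠ w ∧ ¬ S.HasEdge v w ∧ ∀ t ∈ S.faces, v ∈ t ∨ w ∈ t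

/-- One step in the Pachner graph of `n`-vertex flag 2-spheres: an edge flip
between flag 2-spheres (in either direction), or a combinatorial isomorphism
(nodes are isomorphism classes). -/
def FlagStep (S T : Sphere2 n) : Prop :=
  IsFlag S ∧ IsFlag T ∧ (Flip S T ∨ Flip T S ∨ Sphere2.Iso S T)

/-- `S ∼ T` : `S` and `T` are connected in the Pachner graph of `n`-vertex flag
2-spheres, i.e. joined by a sequence of edge flips all whose intermediate
triangulations are `n`-vertex flag 2-spheres. -/
def FlagConn (S T : Sphere2 n) : Prop := Relation.ReflTransGen FlagStep S T

/-! ### Quadrilaterals in triangulated 2-spheres -/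

/-- The boundary edges of a subcomplex `Q` (given by a set of triangles):
the edges lying in exactly one triangle of `Q`. -/
def bdryEdges (Q : Finset (Finset (Fin n))) : Finset (Finset (Fin n)) :=
  (Q.biUnion fun t => t.powersetCard 2).filter fun e =>
    (Q.filter fun t => e ⊆ t).card = 1

/-- The edge set of the 4-cycle `a-b-c-d-a`. -/
def quadCycle (a b c d : Fin n) : Finset (Finset (Fin n)) :=
  {{a, b}, {b, c}, {c, d}, {d, a}}

/-- `Q` is a quadrilateral in `T` with boundary 4-cycle `a-b-c-d-a`: a
subcomplex of `T` which is a triangulated disc whose boundary is the 4-cycle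
`a-b-c-d-a` (connected, with boundary edges exactly the 4-cycle). -/
def IsQuad (T : Sphere2 n) (Q : Finset (Finset (Fin n))) (a b c d : Fin n) :
    Prop :=
  Q ⊆ T.faces ∧ Q.Nonempty ∧ [a, b, c, d].Pairwise (· ≠ ·) ∧
  bdryEdges Q = quadCycle a b c d ∧
  ∀ s ∈ Q, ∀ t ∈ Q,
    Relation.ReflTransGen
      (fun x y : Finset (Fin n) => x ∈ Q ∧ y ∈ Q ∧ (x ∩ y).card = 2) s t

/-- The interior vertices of a quadrilateral with boundary vertices
`a, b, c, d`. -/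
def quadInterior (Q : Finset (Finset (Fin n))) (a b c d : Fin n) :
    Finset (Fin n) :=
  Q.biUnion id \ {a, b, c, d}

/-- An ordered quadrilateral: it has interior vertices, and all interior
vertices have degree four (in the ambient sphere). -/
def IsOrderedQuad (T : Sphere2 n) (Q : Finset (Finset (Fin n)))
    (a b c d : Fin n) : Prop :=
  IsQuad T Q a b c d ∧ (quadInterior Q a b c d).Nonempty ∧
    ∀ v ∈ quadInterior Q a b c d, T.degree v = 4

/-- A proper quadrilateral: its boundary 4-cycle `a-b-c-d-a` is induced in `T`
and all four boundary vertices have degree at least five. -/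
def IsProperQuad (T : Sphere2 n) (Q : Finset (Finset (Fin n)))
    (a b c d : Fin n) : Prop :=
  IsQuad T Q a b c d ∧ ¬ T.HasEdge a c ∧ ¬ T.HasEdge b d ∧
    5 ≤ T.degree a ∧ 5 ≤ T.degree b ∧ 5 ≤ T.degree c ∧ 5 ≤ T.degree d

/-- The diagonal path of the ordered quadrilateral `Q` has an endpoint at the
boundary vertex `v`: exactly one interior vertex of `Q` is adjacent to `v`. -/
def DiagEndAt (T : Sphere2 n) (Q : Finset (Finset (Fin n))) (a b c d : Fin n)
    (v : Fin n) : Prop :=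
  v ∈ ({a, b, c, d} : Finset (Fin n)) ∧
    ∃! u : Fin n, u ∈ quadInterior Q a b c d ∧ T.HasEdge v u

/-! ### Stacked 3-balls and stacked 2-spheres -/

/-- A stacked 3-ball, given by its set of tetrahedra: obtained from a single
tetrahedron by repeatedly gluing a new tetrahedron (with a fresh apex) onto a
boundary triangle. -/
inductive IsStackedBall : Finset (Finset (Fin n)) → Prop
  | single (t : Finset (Fin n)) (ht : t.card = 4) : IsStackedBall {t}
  | glue (B : Finset (Finset (Fin n))) (t : Finset (Fin n)) (x : Fin n)
      (hB : IsStackedBall B) (ht : t.card = 3)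
      (hbd : (B.filter fun τ => t ⊆ τ).card = 1)
      (hx : ∀ τ ∈ B, x ∉ τ) :
      IsStackedBall (insert (insert x t) B)

/-- The boundary triangles of a complex `B` given by a set of tetrahedra:
the triangles lying in exactly one tetrahedron of `B`. -/
def bdry (B : Finset (Finset (Fin n))) : Finset (Finset (Fin n)) :=
  (B.biUnion fun τ => τ.powersetCard 3).filter fun s =>
    (B.filter fun τ => s ⊆ τ).card = 1

/-- A stacked 2-sphere: a triangulated 2-sphere which is the boundary of a
stacked 3-ball. -/
def IsStacked (S : Sphere2 n) : Prop :=
  ∃ B : Finset (Finset (Fin n)), IsStackedBall B ∧ S.faces = bdry B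

/-- The degree of the node `σ` in the dual graph `Λ(B)` of `B`: the number of
tetrahedra of `B` sharing a triangle with `σ`. -/
def dualDeg (B : Finset (Finset (Fin n))) (σ : Finset (Fin n)) : ℕ :=
  (B.filter fun τ => τ ≠ σ ∧ (τ ∩ σ).card = 3).card

/-- One step in the Pachner graph `𝓢_n` of `n`-vertex stacked 2-spheres. -/
def StackedStep (S T : Sphere2 n) : Prop :=
  IsStacked S ∧ IsStacked T ∧ (Flip S T ∨ Flip T S ∨ Sphere2.Iso S T)

/-- Connectivity in the Pachner graph `𝓢_n` of `n`-vertex stacked 2-spheres. -/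
def StackedConn (S T : Sphere2 n) : Prop := Relation.ReflTransGen StackedStep S T

/-- One step in the dual graph `Λ(B)` with the node `σ` deleted. -/
def DualStepAvoiding (B : Finset (Finset (Fin n))) (σ : Finset (Fin n))
    (x y : Finset (Fin n)) : Prop :=
  x ∈ B ∧ y ∈ B ∧ x ≠ σ ∧ y ≠ σ ∧ x ≠ y ∧ (x ∩ y).card = 3

/-- Reachability in the dual graph `Λ(B)` with the node `σ` deleted. -/
def DualReachAvoiding (B : Finset (Finset (Fin n))) (σ x y : Finset (Fin n)) :
    Prop :=
  Relation.ReflTransGen (DualStepAvoiding B σ) x y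

/-- One step (adjacency) in the dual graph `Λ(B)`. -/
def DualStep (B : Finset (Finset (Fin n))) (x y : Finset (Fin n)) : Prop :=
  x ∈ B ∧ y ∈ B ∧ x ≠ y ∧ (x ∩ y).card = 3

/-- The dual graph `Λ(B)` is a path: connected, all degrees at most two, and
some node of degree at most one. -/
def DualIsPath (B : Finset (Finset (Fin n))) : Prop :=
  (∀ σ ∈ B, dualDeg B σ ≤ 2) ∧
  (∀ σ ∈ B, ∀ τ ∈ B, Relation.ReflTransGen (DualStep B) σ τ) ∧
  (∃ σ ∈ B, dualDeg B σ ≤ 1)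

/-- `S` belongs to `𝓢ₙ⁰`: `S` is a stacked 2-sphere whose (unique) stacked
3-ball has a dual graph with no node of degree four. -/
def NoDeg4 (S : Sphere2 n) : Prop :=
  IsStacked S ∧ ∀ B : Finset (Finset (Fin n)), IsStackedBall B →
    S.faces = bdry B → ∀ σ ∈ B, dualDeg B σ ≠ 4

/-- One step in the Pachner graph `𝓢ₙ⁰`. -/
def Step0 (S T : Sphere2 n) : Prop :=
  NoDeg4 S ∧ NoDeg4 T ∧ (Flip S T ∨ Flip T S ∨ Sphere2.Iso S T)

/-- Reachability between vertices in the subcomplex of `B` induced on the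
vertices outside `t`. -/
def inducedReach (B : Finset (Finset (Fin n))) (t : Finset (Fin n))
    (x y : Fin n) : Prop :=
  Relation.ReflTransGen
    (fun u v : Fin n => u ≠ v ∧ u ∉ t ∧ v ∉ t ∧ ∃ τ ∈ B, u ∈ τ ∧ v ∈ τ) x y

/-- The tetrahedra of the clique complex of the edge graph of `S`:
all 4-cliques of the edge graph. -/
def cliqueTets (S : Sphere2 n) : Finset (Finset (Fin n)) :=
  (Finset.univ.powersetCard 4).filter fun τ =>
    ∀ u ∈ τ, ∀ v ∈ τ, u ≠ v → S.HasEdge u v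

/-! ### Trees with maximum node-degree four, and counting components -/

/-- Trees on `m` nodes with all node-degrees at most four. -/
abbrev DegLe4Tree (m : ℕ) : Type :=
  {G : SimpleGraph (Fin m) // G.IsTree ∧ ∀ v, (G.neighborSet v).ncard ≤ 4}

/-- Trees up to graph isomorphism. -/
def treeSetoid (m : ℕ) : Setoid (DegLe4Tree m) :=
  Relation.EqvGen.setoid fun G H => Nonempty (G.1 ≃g H.1)

/-- `t(m)`: the number of isomorphism classes of trees on `m` nodes with
maximum node-degree at most four. -/
noncomputable def numDeg4Trees (m : ℕ) : ℕ := Nat.card (Quotient (treeSetoid m))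

/-- Stacked 2-spheres modulo connectivity in the Pachner graph `𝓢_n`
(nodes of `𝓢_n` are isomorphism classes, arcs are edge flips). -/
def stackedSetoid (n : ℕ) : Setoid {S : Sphere2 n // IsStacked S} :=
  Relation.EqvGen.setoid fun S T => Flip S.1 T.1 ∨ Sphere2.Iso S.1 T.1

/-- The number of connected components of the Pachner graph `𝓢_n` of
`n`-vertex stacked 2-spheres. -/
noncomputable def numStackedComponents (n : ℕ) : ℕ := Nat.card (Quotient (stackedSetoid n))


/-! ### Auxiliary lemmas about stacked balls -/

section StackedAux

/-- All triangles of a set of tetrahedra. -/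
def allTris (B : Finset (Finset (Fin n))) : Finset (Finset (Fin n)) :=
  B.biUnion fun τ => τ.powersetCard 3

lemma mem_allTris {B : Finset (Finset (Fin n))} {s : Finset (Fin n)} :
    s ∈ allTris B ↔ ∃ τ ∈ B, s ⊆ τ ∧ s.card = 3 := by
  simp [allTris, Finset.mem_powersetCard]

lemma bdry_eq_filter (B : Finset (Finset (Fin n))) :
    bdry B = (allTris B).filter fun s => (B.filter fun τ => s ⊆ τ).card = 1 := rfl

lemma bdry_subset_allTris (B : Finset (Finset (Fin n))) : bdry B ⊆ allTris B := by
  rw [bdry_eq_filter]; exact Finset.filter_subset _ _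

lemma filter_card_one_exists {B : Finset (Finset (Fin n))} {t : Finset (Fin n)}
    (h : (B.filter fun τ => t ⊆ τ).card = 1) : ∃ τ ∈ B, t ⊆ τ := by
  obtain ⟨τ, hτ⟩ := Finset.card_pos.1 (h ▸ one_pos)
  rw [Finset.mem_filter] at hτ
  exact ⟨τ, hτ.1, hτ.2⟩

lemma x_not_tri {B : Finset (Finset (Fin n))} {x : Fin n}
    (hx : ∀ τ ∈ B, x ∉ τ) {s : Finset (Fin n)} (hs : s ∈ allTris B) : x ∉ s := by
  obtain ⟨τ, hτ, hsτ, -⟩ := mem_allTris.1 hs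
  exact fun h => hx τ hτ (hsτ h)

lemma stacked_card_four {B : Finset (Finset (Fin n))} (hB : IsStackedBall B) :
    ∀ τ ∈ B, τ.card = 4 := by
  induction hB with
  | single t ht =>
    intro τ hτ
    rw [Finset.mem_singleton] at hτ
    subst hτ; exact ht
  | glue B t x hB ht hbd hx ih =>
    intro τ hτ
    rcases Finset.mem_insert.1 hτ with rfl | h
    · obtain ⟨τ₀, hτ₀B, htτ₀⟩ := filter_card_one_exists hbd
      have hxt : x ∉ t := fun hxt => hx τ₀ hτ₀B (htτ₀ hxt)
      rw [Finset.card_insert_of_notMem hxt, ht]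
    · exact ih τ h

lemma stacked_nonempty {B : Finset (Finset (Fin n))} (hB : IsStackedBall B) :
    B.Nonempty := by
  induction hB with
  | single t ht => exact ⟨t, Finset.mem_singleton_self t⟩
  | glue B t x hB ht hbd hx ih => exact ⟨insert x t, Finset.mem_insert_self _ _⟩

lemma glue_new_not_mem {B : Finset (Finset (Fin n))} {t : Finset (Fin n)} {x : Fin n}
    (hx : ∀ τ ∈ B, x ∉ τ) : insert x t ∉ B :=
  fun h => hx _ h (Finset.mem_insert_self x t)

lemma glue_filter_x {B : Finset (Finset (Fin n))} {t s : Finset (Fin n)} {x : Fin n}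
    (hx : ∀ τ ∈ B, x ∉ τ) (hxs : x ∈ s) (hst : s ⊆ insert x t) :
    (insert (insert x t) B).filter (fun τ => s ⊆ τ) = {insert x t} := by
  ext τ
  simp only [Finset.mem_filter, Finset.mem_insert, Finset.mem_singleton]
  constructor
  · rintro ⟨h | h, hsub⟩
    · exact h
    · exact absurd (hsub hxs) (hx τ h)
  · rintro rfl
    exact ⟨Or.inl rfl, hst⟩

lemma glue_filter_t {B : Finset (Finset (Fin n))} {t : Finset (Fin n)} {x : Fin n}
    (hx : ∀ τ ∈ B, x ∉ τ) :
    ((insert (insert x t) B).filter fun τ => t ⊆ τ).card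
      = (B.filter fun τ => t ⊆ τ).card + 1 := by
  rw [Finset.filter_insert, if_pos (Finset.subset_insert x t),
    Finset.card_insert_of_notMem]
  intro h
  exact hx _ (Finset.mem_of_mem_filter _ h) (Finset.mem_insert_self x t)

lemma glue_filter_other {B : Finset (Finset (Fin n))} {t s : Finset (Fin n)} {x : Fin n}
    (hxs : x ∉ s) (hst : s ≠ t) (hs3 : s.card = 3) (ht : t.card = 3) :
    (insert (insert x t) B).filter (fun τ => s ⊆ τ) = B.filter (fun τ => s ⊆ τ) := by
  rw [Finset.filter_insert, if_neg]
  intro hsub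
  have hsubt : s ⊆ t := by
    intro y hy
    rcases Finset.mem_insert.1 (hsub hy) with rfl | h
    · exact absurd hy hxs
    · exact h
  exact hst (Finset.eq_of_subset_of_card_le hsubt (by omega))

lemma mem_bdry_glue_new {B : Finset (Finset (Fin n))} {t s : Finset (Fin n)} {x : Fin n}
    (hx : ∀ τ ∈ B, x ∉ τ) (hxs : x ∈ s) (hst : s ⊆ insert x t) (hs3 : s.card = 3) :
    s ∈ bdry (insert (insert x t) B) := by
  rw [bdry_eq_filter, Finset.mem_filter]
  refine ⟨mem_allTris.2 ⟨insert x t, Finset.mem_insert_self _ _, hst, hs3⟩, ?_⟩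
  rw [glue_filter_x hx hxs hst, Finset.card_singleton]

lemma mem_bdry_glue_old {B : Finset (Finset (Fin n))} {t s : Finset (Fin n)} {x : Fin n}
    (hx : ∀ τ ∈ B, x ∉ τ) (ht : t.card = 3) (hs : s ∈ bdry B) (hst : s ≠ t) :
    s ∈ bdry (insert (insert x t) B) := by
  rw [bdry_eq_filter, Finset.mem_filter] at hs ⊢
  obtain ⟨τ, hτ, hsτ, hs3⟩ := mem_allTris.1 hs.1
  have hxs : x ∉ s := x_not_tri hx hs.1
  refine ⟨mem_allTris.2 ⟨τ, Finset.mem_insert_of_mem hτ, hsτ, hs3⟩, ?_⟩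
  rw [glue_filter_other hxs hst hs3 ht]
  exact hs.2

lemma t_mem_bdry {B : Finset (Finset (Fin n))} {t : Finset (Fin n)}
    (ht : t.card = 3) (hbd : (B.filter fun τ => t ⊆ τ).card = 1) :
    t ∈ bdry B := by
  obtain ⟨τ₀, hτ₀B, htτ₀⟩ := filter_card_one_exists hbd
  rw [bdry_eq_filter, Finset.mem_filter]
  exact ⟨mem_allTris.2 ⟨τ₀, hτ₀B, htτ₀, ht⟩, hbd⟩

lemma bdry_glue {B : Finset (Finset (Fin n))} {t : Finset (Fin n)} {x : Fin n}
    (hx : ∀ τ ∈ B, x ∉ τ) (ht : t.card = 3) (hxt : x ∉ t)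
    (hbd : (B.filter fun τ => t ⊆ τ).card = 1) :
    bdry (insert (insert x t) B)
      = ((bdry B).erase t) ∪ (t.powersetCard 2).image (insert x) := by
  ext s
  simp only [Finset.mem_union, Finset.mem_erase, Finset.mem_image,
    Finset.mem_powersetCard]
  constructor
  · intro hs
    by_cases hxs : x ∈ s
    · right
      rw [bdry_eq_filter, Finset.mem_filter] at hs
      obtain ⟨τ, hτ, hsτ, hs3⟩ := mem_allTris.1 hs.1
      have hτσ : τ = insert x t := by
        rcases Finset.mem_insert.1 hτ with rfl | h
        · rfl
        · exact absurd (hsτ hxs) (hx τ h)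
      subst hτσ
      refine ⟨s.erase x, ⟨?_, ?_⟩, Finset.insert_erase hxs⟩
      · intro y hy
        have hys := Finset.mem_of_mem_erase hy
        rcases Finset.mem_insert.1 (hsτ hys) with rfl | h
        · exact absurd rfl (Finset.ne_of_mem_erase hy)
        · exact h
      · rw [Finset.card_erase_of_mem hxs, hs3]
    · left
      have hst : s ≠ t := by
        rintro rfl
        rw [bdry_eq_filter, Finset.mem_filter, glue_filter_t hx, hbd] at hs
        omega
      refine ⟨hst, ?_⟩
      rw [bdry_eq_filter, Finset.mem_filter] at hs ⊢
      obtain ⟨τ, hτ, hsτ, hs3⟩ := mem_allTris.1 hs.1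
      have hτB : τ ∈ B := by
        rcases Finset.mem_insert.1 hτ with rfl | h
        · exfalso
          have hsubt : s ⊆ t := by
            intro y hy
            rcases Finset.mem_insert.1 (hsτ hy) with rfl | h'
            · exact absurd hy hxs
            · exact h'
          exact hst (Finset.eq_of_subset_of_card_le hsubt (by omega))
        · exact h
      refine ⟨mem_allTris.2 ⟨τ, hτB, hsτ, hs3⟩, ?_⟩
      rw [glue_filter_other hxs hst hs3 ht] at hs
      exact hs.2
  · rintro (⟨hst, hs⟩ | ⟨e, ⟨het, he2⟩, rfl⟩)
    · exact mem_bdry_glue_old hx ht hs hst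
    · have hxe : x ∉ e := fun h => hxt (het h)
      exact mem_bdry_glue_new hx (Finset.mem_insert_self x e)
        (Finset.insert_subset_insert x het)
        (by rw [Finset.card_insert_of_notMem hxe, he2])

lemma powersetCard3_insert {t : Finset (Fin n)} {x : Fin n}
    (hxt : x ∉ t) (ht : t.card = 3) :
    (insert x t).powersetCard 3 = insert t ((t.powersetCard 2).image (insert x)) := by
  ext s
  simp only [Finset.mem_powersetCard, Finset.mem_insert, Finset.mem_image]
  constructor
  · rintro ⟨hst, hs3⟩
    by_cases hxs : x ∈ s
    · right
      refine ⟨s.erase x, ⟨?_, ?_⟩, Finset.insert_erase hxs⟩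
      · intro y hy
        have hys := Finset.mem_of_mem_erase hy
        rcases Finset.mem_insert.1 (hst hys) with rfl | h
        · exact absurd rfl (Finset.ne_of_mem_erase hy)
        · exact h
      · rw [Finset.card_erase_of_mem hxs, hs3]
    · left
      have hsubt : s ⊆ t := by
        intro y hy
        rcases Finset.mem_insert.1 (hst hy) with rfl | h
        · exact absurd hy hxs
        · exact h
      exact Finset.eq_of_subset_of_card_le hsubt (by omega)
  · rintro (rfl | ⟨e, he, rfl⟩)
    · exact ⟨Finset.subset_insert x s, ht⟩
    · have hxe : x ∉ e := fun h => hxt (he.1 h)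
      exact ⟨Finset.insert_subset_insert x he.1,
        by rw [Finset.card_insert_of_notMem hxe, he.2]⟩

lemma allTris_glue {B : Finset (Finset (Fin n))} {t : Finset (Fin n)} {x : Fin n}
    (ht : t.card = 3) (hxt : x ∉ t)
    (hbd : (B.filter fun τ => t ⊆ τ).card = 1) :
    allTris (insert (insert x t) B)
      = allTris B ∪ (t.powersetCard 2).image (insert x) := by
  obtain ⟨τ₀, hτ₀B, htτ₀⟩ := filter_card_one_exists hbd
  have htB : t ∈ allTris B := mem_allTris.2 ⟨τ₀, hτ₀B, htτ₀, ht⟩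
  rw [allTris, Finset.biUnion_insert, powersetCard3_insert hxt ht]
  rw [show (B.biUnion fun τ => τ.powersetCard 3) = allTris B from rfl]
  ext s
  simp only [Finset.mem_union, Finset.mem_insert]
  constructor
  · rintro ((rfl | h) | h)
    · exact Or.inl htB
    · exact Or.inr h
    · exact Or.inl h
  · rintro (h | h)
    · exact Or.inr h
    · exact Or.inl (Or.inr h)

lemma image_insert_card {t : Finset (Fin n)} {x : Fin n}
    (hxt : x ∉ t) (ht : t.card = 3) :
    ((t.powersetCard 2).image (insert x)).card = 3 := by
  have hinj : Set.InjOn (insert x) (↑(t.powersetCard 2) : Set (Finset (Fin n))) := by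
    intro e₁ h₁ e₂ h₂ hins
    rw [Finset.mem_coe, Finset.mem_powersetCard] at h₁ h₂
    have hx₁ : x ∉ e₁ := fun h => hxt (h₁.1 h)
    have hx₂ : x ∉ e₂ := fun h => hxt (h₂.1 h)
    rw [← Finset.erase_insert hx₁, ← Finset.erase_insert hx₂, hins]
  rw [Finset.card_image_of_injOn hinj, Finset.card_powersetCard, ht]
  decide

lemma disj_image_insert {A : Finset (Finset (Fin n))} {t : Finset (Fin n)} {x : Fin n}
    (hxt : x ∉ t) (hA : ∀ s ∈ A, x ∉ s) :
    Disjoint A ((t.powersetCard 2).image (insert x)) := by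
  rw [Finset.disjoint_right]
  rintro s hs hsA
  obtain ⟨e, he, rfl⟩ := Finset.mem_image.1 hs
  exact hA _ hsA (Finset.mem_insert_self x e)

lemma card_allTris {B : Finset (Finset (Fin n))} (hB : IsStackedBall B) :
    (allTris B).card = 3 * B.card + 1 := by
  induction hB with
  | single t ht =>
    have : allTris {t} = t.powersetCard 3 := by
      rw [allTris, Finset.singleton_biUnion]
    rw [this, Finset.card_powersetCard, ht, Finset.card_singleton]
    decide
  | glue B t x hB ht hbd hx ih =>
    obtain ⟨τ₀, hτ₀B, htτ₀⟩ := filter_card_one_exists hbd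
    have hxt : x ∉ t := fun hxt => hx τ₀ hτ₀B (htτ₀ hxt)
    rw [allTris_glue ht hxt hbd,
      Finset.card_union_of_disjoint (disj_image_insert hxt (fun s hs => x_not_tri hx hs)),
      ih, image_insert_card hxt ht,
      Finset.card_insert_of_notMem (glue_new_not_mem hx)]
    ring

lemma card_bdry {B : Finset (Finset (Fin n))} (hB : IsStackedBall B) :
    (bdry B).card = 2 * B.card + 2 := by
  induction hB with
  | single t ht =>
    have : bdry {t} = t.powersetCard 3 := by
      rw [bdry_eq_filter]
      have h1 : allTris {t} = t.powersetCard 3 := by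
        rw [allTris, Finset.singleton_biUnion]
      rw [h1, Finset.filter_true_of_mem]
      intro s hs
      rw [Finset.mem_powersetCard] at hs
      rw [Finset.filter_singleton, if_pos hs.1, Finset.card_singleton]
    rw [this, Finset.card_powersetCard, ht, Finset.card_singleton]
    decide
  | glue B t x hB ht hbd hx ih =>
    obtain ⟨τ₀, hτ₀B, htτ₀⟩ := filter_card_one_exists hbd
    have hxt : x ∉ t := fun hxt => hx τ₀ hτ₀B (htτ₀ hxt)
    have htbd : t ∈ bdry B := t_mem_bdry ht hbd
    rw [bdry_glue hx ht hxt hbd,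
      Finset.card_union_of_disjoint (disj_image_insert hxt
        (fun s hs => x_not_tri hx (bdry_subset_allTris B (Finset.mem_of_mem_erase hs)))),
      Finset.card_erase_of_mem htbd, ih, image_insert_card hxt ht,
      Finset.card_insert_of_notMem (glue_new_not_mem hx)]
    ring_nf
    omega

lemma card_vertices {B : Finset (Finset (Fin n))} (hB : IsStackedBall B) :
    (B.biUnion id).card = B.card + 3 := by
  induction hB with
  | single t ht =>
    rw [Finset.singleton_biUnion, Finset.card_singleton]
    simpa using ht
  | glue B t x hB ht hbd hx ih =>
    obtain ⟨τ₀, hτ₀B, htτ₀⟩ := filter_card_one_exists hbd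
    have hxt : x ∉ t := fun hxt => hx τ₀ hτ₀B (htτ₀ hxt)
    have hbu : (insert (insert x t) B).biUnion id = insert x (B.biUnion id) := by
      rw [Finset.biUnion_insert]
      ext y
      simp only [Finset.mem_union, Finset.mem_insert, id, Finset.mem_biUnion]
      constructor
      · rintro ((rfl | h) | h)
        · exact Or.inl rfl
        · exact Or.inr ⟨τ₀, hτ₀B, htτ₀ h⟩
        · exact Or.inr (by simpa using h)
      · rintro (rfl | h)
        · exact Or.inl (Or.inl rfl)
        · exact Or.inr (by simpa using h)
    have hxB : x ∉ B.biUnion id := by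
      simp only [Finset.mem_biUnion, id]
      rintro ⟨τ, hτ, hxτ⟩
      exact hx τ hτ hxτ
    rw [hbu, Finset.card_insert_of_notMem hxB, ih,
      Finset.card_insert_of_notMem (glue_new_not_mem hx)]

lemma edges_in_bdry {B : Finset (Finset (Fin n))} (hB : IsStackedBall B) :
    ∀ τ ∈ B, ∀ e ⊆ τ, e.card = 2 → ∃ s ∈ bdry B, e ⊆ s := by
  induction hB with
  | single t ht =>
    intro τ hτ e he he2
    rw [Finset.mem_singleton] at hτ
    subst hτ
    obtain ⟨s, hes, hsτ, hs3⟩ := Finset.exists_subsuperset_card_eq (n := 3) he (by omega) (by omega)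
    refine ⟨s, ?_, hes⟩
    rw [bdry_eq_filter, Finset.mem_filter]
    refine ⟨mem_allTris.2 ⟨τ, Finset.mem_singleton_self τ, hsτ, hs3⟩, ?_⟩
    rw [Finset.filter_singleton, if_pos hsτ, Finset.card_singleton]
  | glue B t x hB ht hbd hx ih =>
    obtain ⟨τ₀, hτ₀B, htτ₀⟩ := filter_card_one_exists hbd
    have hxt : x ∉ t := fun hxt => hx τ₀ hτ₀B (htτ₀ hxt)
    have hσ4 : (insert x t).card = 4 := by
      rw [Finset.card_insert_of_notMem hxt, ht]
    have key : ∀ e ⊆ insert x t, e.card = 2 →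
        ∃ s ∈ bdry (insert (insert x t) B), e ⊆ s := by
      intro e he he2
      have h1 : insert x e ⊆ insert x t :=
        Finset.insert_subset (Finset.mem_insert_self x t) he
      have h2 : (insert x e).card ≤ 3 := by
        calc (insert x e).card ≤ e.card + 1 := Finset.card_insert_le x e
        _ = 3 := by omega
      obtain ⟨s, hes, hsσ, hs3⟩ := Finset.exists_subsuperset_card_eq h1 h2 (by omega)
      refine ⟨s, mem_bdry_glue_new hx (hes (Finset.mem_insert_self x e)) hsσ hs3, ?_⟩
      exact (Finset.subset_insert x e).trans hes
    intro τ hτ e he he2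
    rcases Finset.mem_insert.1 hτ with rfl | hτB
    · exact key e he he2
    · obtain ⟨s, hsbd, hes⟩ := ih τ hτB e he he2
      by_cases hst : s = t
      · subst hst
        exact key e (hes.trans (Finset.subset_insert x s)) he2
      · exact ⟨s, mem_bdry_glue_old hx ht hsbd hst, hes⟩

lemma clique_tetra {B : Finset (Finset (Fin n))} (hB : IsStackedBall B) :
    ∀ u v w : Fin n, u ≠ v → u ≠ w → v ≠ w →
    (∃ τ ∈ B, u ∈ τ ∧ v ∈ τ) → (∃ τ ∈ B, u ∈ τ ∧ w ∈ τ) →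
    (∃ τ ∈ B, v ∈ τ ∧ w ∈ τ) →
    ∃ τ ∈ B, u ∈ τ ∧ v ∈ τ ∧ w ∈ τ := by
  induction hB with
  | single t ht =>
    intro u v w huv huw hvw h1 h2 h3
    obtain ⟨τ, hτ, hu, hv⟩ := h1
    obtain ⟨τ', hτ', -, hw⟩ := h2
    rw [Finset.mem_singleton] at hτ hτ'
    exact ⟨τ, by rw [hτ]; exact Finset.mem_singleton_self _, hu, hv, by rwa [hτ, ← hτ']⟩
  | glue B t x hB ht hbd hx ih =>
    obtain ⟨τ₀, hτ₀B, htτ₀⟩ := filter_card_one_exists hbd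
    intro u v w huv huw hvw h1 h2 h3
    have hmem : ∀ y : Fin n,
        (∃ τ ∈ insert (insert x t) B, x ∈ τ ∧ y ∈ τ) → y ∈ insert x t := by
      rintro y ⟨τ, hτ, hxτ, hyτ⟩
      rcases Finset.mem_insert.1 hτ with rfl | h
      · exact hyτ
      · exact absurd hxτ (hx τ h)
    have down : ∀ a b : Fin n, a ≠ x → b ≠ x →
        (∃ τ ∈ insert (insert x t) B, a ∈ τ ∧ b ∈ τ) →
        ∃ τ ∈ B, a ∈ τ ∧ b ∈ τ := by
      rintro a b ha hb ⟨τ, hτ, haτ, hbτ⟩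
      rcases Finset.mem_insert.1 hτ with rfl | h
      · refine ⟨τ₀, hτ₀B, htτ₀ ?_, htτ₀ ?_⟩
        · rcases Finset.mem_insert.1 haτ with rfl | h'
          · exact absurd rfl ha
          · exact h'
        · rcases Finset.mem_insert.1 hbτ with rfl | h'
          · exact absurd rfl hb
          · exact h'
      · exact ⟨τ, h, haτ, hbτ⟩
    by_cases hux : u = x
    · subst hux
      exact ⟨insert u t, Finset.mem_insert_self _ _, Finset.mem_insert_self u t,
        hmem v h1, hmem w h2⟩
    by_cases hvx : v = x
    · subst hvx
      refine ⟨insert v t, Finset.mem_insert_self _ _, ?_, Finset.mem_insert_self v t,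
        hmem w h3⟩
      have := hmem u (by obtain ⟨τ, hτ, hu, hv⟩ := h1; exact ⟨τ, hτ, hv, hu⟩)
      exact this
    by_cases hwx : w = x
    · subst hwx
      refine ⟨insert w t, Finset.mem_insert_self _ _, ?_, ?_, Finset.mem_insert_self w t⟩
      · exact hmem u (by obtain ⟨τ, hτ, hu, hw⟩ := h2; exact ⟨τ, hτ, hw, hu⟩)
      · exact hmem v (by obtain ⟨τ, hτ, hv, hw⟩ := h3; exact ⟨τ, hτ, hw, hv⟩)
    obtain ⟨τ, hτ, h⟩ := ih u v w huv huw hvw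
      (down u v hux hvx h1) (down u w hux hwx h2) (down v w hvx hwx h3)
    exact ⟨τ, Finset.mem_insert_of_mem hτ, h⟩

end StackedAux

/-- For `n ≥ 4`, an `n`-vertex stacked 2-sphere has exactly
`n - 4` induced 3-cycles: 3-sets of pairwise adjacent vertices not spanning a
triangle. -/
theorem stacked_sphere_induced_three_cycles (n : ℕ) (hn : 4 ≤ n)
    (S : Sphere2 n) (hS : IsStacked S) :
    (((Finset.univ : Finset (Fin n)).powersetCard 3).filter fun s =>
        (∀ u ∈ s, ∀ v ∈ s, u ≠ v → S.HasEdge u v) ∧ s ∉ S.faces).card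
      = n - 4 := by
  obtain ⟨B, hB, hfaces⟩ := hS
  have hsub : bdry B ⊆ allTris B := bdry_subset_allTris B
  have hedge : ∀ u v : Fin n, S.HasEdge u v ↔ u ≠ v ∧ ∃ τ ∈ B, u ∈ τ ∧ v ∈ τ := by
    intro u v
    constructor
    · rintro ⟨huv, he⟩
      refine ⟨huv, ?_⟩
      rw [Sphere2.edges, hfaces] at he
      obtain ⟨f, hf, hef⟩ := Finset.mem_biUnion.1 he
      rw [Finset.mem_powersetCard] at hef
      obtain ⟨τ, hτ, hfτ, -⟩ := mem_allTris.1 (hsub hf)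
      exact ⟨τ, hτ, hfτ (hef.1 (by simp)), hfτ (hef.1 (by simp))⟩
    · rintro ⟨huv, τ, hτ, huτ, hvτ⟩
      refine ⟨huv, ?_⟩
      have hsub2 : ({u, v} : Finset (Fin n)) ⊆ τ := by
        intro y hy
        rcases Finset.mem_insert.1 hy with rfl | hy
        · exact huτ
        · rw [Finset.mem_singleton] at hy; subst hy; exact hvτ
      have hcard : ({u, v} : Finset (Fin n)).card = 2 := Finset.card_pair huv
      obtain ⟨s, hsbd, hes⟩ := edges_in_bdry hB τ hτ _ hsub2 hcard
      rw [Sphere2.edges, hfaces]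
      exact Finset.mem_biUnion.2 ⟨s, hsbd, Finset.mem_powersetCard.2 ⟨hes, hcard⟩⟩
  have hset : (((Finset.univ : Finset (Fin n)).powersetCard 3).filter fun s =>
        (∀ u ∈ s, ∀ v ∈ s, u ≠ v → S.HasEdge u v) ∧ s ∉ S.faces)
      = allTris B \ bdry B := by
    ext s
    simp only [Finset.mem_filter, Finset.mem_sdiff, Finset.mem_powersetCard,
      Finset.subset_univ, true_and]
    constructor
    · rintro ⟨hcard, hadj, hnf⟩
      rw [hfaces] at hnf
      refine ⟨?_, hnf⟩
      obtain ⟨u, v, w, huv, huw, hvw, rfl⟩ := Finset.card_eq_three.1 hcard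
      have h1 := (hedge u v).1 (hadj u (by simp) v (by simp) huv)
      have h2 := (hedge u w).1 (hadj u (by simp) w (by simp) huw)
      have h3 := (hedge v w).1 (hadj v (by simp) w (by simp) hvw)
      obtain ⟨τ, hτ, hu, hv, hw⟩ := clique_tetra hB u v w huv huw hvw h1.2 h2.2 h3.2
      refine mem_allTris.2 ⟨τ, hτ, ?_, hcard⟩
      intro y hy
      rcases Finset.mem_insert.1 hy with rfl | hy
      · exact hu
      rcases Finset.mem_insert.1 hy with rfl | hy
      · exact hv
      · rw [Finset.mem_singleton] at hy; subst hy; exact hw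
    · rintro ⟨hsA, hsb⟩
      obtain ⟨τ, hτ, hsτ, hcard⟩ := mem_allTris.1 hsA
      refine ⟨hcard, ?_, by rw [hfaces]; exact hsb⟩
      intro u hu v hv huv
      exact (hedge u v).2 ⟨huv, τ, hτ, hsτ hu, hsτ hv⟩
  rw [hset, Finset.card_sdiff_of_subset hsub, card_allTris hB, card_bdry hB]
  have hvert : (Finset.univ : Finset (Fin n)) = B.biUnion id := by
    refine Finset.Subset.antisymm ?_ (Finset.subset_univ _)
    intro v _
    obtain ⟨f, hf, hvf⟩ := S.covers v
    rw [hfaces] at hf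
    obtain ⟨τ, hτ, hfτ, -⟩ := mem_allTris.1 (hsub hf)
    exact Finset.mem_biUnion.2 ⟨τ, hτ, hfτ hvf⟩
  have hn : n = B.card + 3 := by
    have h := card_vertices hB
    rw [← hvert] at h
    simp at h
    omega
  have hpos : 1 ≤ B.card := Finset.card_pos.2 (stacked_nonempty hB)
  omega

end PachnerSpheres
end

section
/- Let S be a stacked 2-sphere and let α = abc and β = abd be two distinct triangles of S sharing the edge ab. Then the following are equivalent: (1) the nodes ᾱ and β̄ are adjacent in the dual tree Λ(S̄); (2) the link of the edge ab in S̄ is a path of length exactly two from c to d; (3) the edge ab is contained in exactly two tetrahedra of S̄; (4) the vertices a and b have exactly three common neighbours in the edge graph of S; (5) there exists a unique vertex e ∉ {c, d} such that ae and be are both edges of S. -/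
namespace PachnerSpheres

open Finset

variable {n : ℕ}

/-!
In the stacked ball `B = S̄` the link of the edge `ab` is a tree whose edges are the `τ \ {a, b}`
for the tetrahedra `τ ⊇ ab`, so it has `k + 1` vertices when `ab` lies in `k` tetrahedra; and
since the faces of `B` are the cliques of its edge graph, these vertices are exactly the common
neighbours of `a` and `b` in `S`. This gives (3) ⇔ (4) ⇔ (5).

The boundary triangles `abc`, `abd` lie in the single tetrahedra `ᾱ`, `β̄`. If these share a
triangle `abm`, then, as every triangle lies in at most two tetrahedra, `{c, m, d}` is closed
under adjacency in the link, so by connectedness the link is the path `c - m - d` and `k = 2`.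
Conversely, if `k = 2` with tetrahedra `σ ≠ τ`, then `|σ ∪ τ| = 2 + |link| = 5` forces
`|σ ∩ τ| = 3`, and `{σ, τ} = {ᾱ, β̄}` because a tetrahedron `abcd` would meet the other one,
which avoids `c` and `d`, only in `ab`.
-/

section FinsetLemmas

variable {α : Type*} [DecidableEq α]

lemma card_eq_three_iff_existsUnique {s : Finset α} {c d : α}
    (hc : c ∈ s) (hd : d ∈ s) (hcd : c ≠ d) : s.card = 3 ↔ ∃! x, x ≠ c ∧ x ≠ d ∧ x ∈ s := by
  have hsplit := card_sdiff_add_card_eq_card (insert_subset hc (singleton_subset_iff.2 hd))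
  rw [← hsplit, card_pair hcd, show ∀ k, k + 2 = 3 ↔ k = 1 by omega,
    card_eq_one_iff_existsUnique]
  simp only [mem_sdiff, mem_insert, mem_singleton, not_or]
  exact existsUnique_congr fun x => by tauto

lemma exists_sdiff_eq_pair_of_card_inter_eq_three {s t e : Finset α} {c d : α}
    (hs : s.card = 4) (ht : t.card = 4) (he : e.card = 2) (hes : e ⊆ s) (het : e ⊆ t)
    (hcap : (s ∩ t).card = 3) (hcs : c ∈ s) (hct : c ∉ t) (hdt : d ∈ t) (hds : d ∉ s) :
    ∃ m, m ∉ e ∧ m ≠ c ∧ m ≠ d ∧ s \ e = {c, m} ∧ t \ e = {m, d} := by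
  obtain ⟨m, hm⟩ := card_eq_one.1 (show ((s ∩ t) \ e).card = 1 by
    rw [card_sdiff_of_subset (subset_inter hes het), hcap, he])
  obtain ⟨hmst, hme⟩ := mem_sdiff.1 (hm ▸ mem_singleton_self m)
  obtain ⟨hms, hmt⟩ := mem_inter.1 hmst
  have hmc : m ≠ c := fun h => hct (h ▸ hmt)
  have hmd : m ≠ d := fun h => hds (h ▸ hms)
  refine ⟨m, hme, hmc, hmd, ?_, ?_⟩
  · refine (eq_of_subset_of_card_le ?_ ?_).symm
    · exact insert_subset (mem_sdiff.2 ⟨hcs, fun h => hct (het h)⟩)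
        (singleton_subset_iff.2 (mem_sdiff.2 ⟨hms, hme⟩))
    · rw [card_sdiff_of_subset hes, hs, he, card_pair hmc.symm]
  · refine (eq_of_subset_of_card_le ?_ ?_).symm
    · exact insert_subset (mem_sdiff.2 ⟨hmt, hme⟩)
        (singleton_subset_iff.2 (mem_sdiff.2 ⟨hdt, fun h => hds (hes h)⟩))
    · rw [card_sdiff_of_subset het, ht, he, card_pair hmd]

lemma notMem_and_card_eq_two_of_card_insert_eq_three {a b c : α}
    (h : (insert c {a, b} : Finset α).card = 3) :
    c ∉ ({a, b} : Finset α) ∧ ({a, b} : Finset α).card = 2 := by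
  have hab := card_le_two (a := a) (b := b)
  by_cases hc : c ∈ ({a, b} : Finset α)
  · rw [insert_eq_of_mem hc] at h
    omega
  · rw [card_insert_of_notMem hc] at h
    exact ⟨hc, by omega⟩

lemma reflTransGen_of_mem_insert {r : α → α → Prop} {L : Finset α} {x w : α}
    (hconn : ∀ y ∈ L, ∀ z ∈ L, Relation.ReflTransGen r y z) (hw : w ∈ L) (hxw : r x w)
    (hwx : r w x) : ∀ y ∈ insert x L, ∀ z ∈ insert x L, Relation.ReflTransGen r y z := by
  have hto (y : α) (hy : y ∈ insert x L) : Relation.ReflTransGen r y w := by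
    rcases mem_insert.1 hy with rfl | hy
    exacts [.single hxw, hconn y hy w hw]
  have hfrom (z : α) (hz : z ∈ insert x L) : Relation.ReflTransGen r w z := by
    rcases mem_insert.1 hz with rfl | hz
    exacts [.single hwx, hconn w hw z hz]
  exact fun y hy z hz => (hto y hy).trans (hfrom z hz)

end FinsetLemmas

section Link

variable {α : Type*} [DecidableEq α]

def star (B : Finset (Finset α)) (s : Finset α) : Finset (Finset α) :=
  B.filter (s ⊆ ·)

def link (B : Finset (Finset α)) (e : Finset α) : Finset α :=
  (star B e).biUnion (· \ e)

def LinkAdj (B : Finset (Finset α)) (e : Finset α) (x y : α) : Prop :=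
  x ≠ y ∧ ∃ τ ∈ star B e, x ∈ τ \ e ∧ y ∈ τ \ e

variable {B : Finset (Finset α)} {e s : Finset α}

@[simp]
lemma mem_star {τ : Finset α} : τ ∈ star B s ↔ τ ∈ B ∧ s ⊆ τ := mem_filter

lemma mem_link {x : α} : x ∈ link B e ↔ x ∉ e ∧ ∃ τ ∈ B, insert x e ⊆ τ := by
  simp only [link, mem_biUnion, mem_star, mem_sdiff, insert_subset_iff]
  tauto

lemma star_anti {s' : Finset α} (h : s ⊆ s') : star B s' ⊆ star B s :=
  fun _ hτ => mem_star.2 ⟨(mem_star.1 hτ).1, h.trans (mem_star.1 hτ).2⟩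

lemma star_insert_of_subset {τ₀ : Finset α} (h : s ⊆ τ₀) :
    star (insert τ₀ B) s = insert τ₀ (star B s) := by
  rw [star, filter_insert, if_pos h]; rfl

lemma star_insert_of_not_subset {τ₀ : Finset α} (h : ¬ s ⊆ τ₀) :
    star (insert τ₀ B) s = star B s := by
  rw [star, filter_insert, if_neg h]; rfl

lemma link_eq_of_star_eq_pair {τ σ : Finset α} (h : star B e = {τ, σ}) :
    link B e = (τ ∪ σ) \ e := by
  simp [link, h, union_sdiff_distrib]

lemma link_subset_of_closed {T : Finset α}
    (hconn : ∀ x ∈ link B e, ∀ y ∈ link B e, Relation.ReflTransGen (LinkAdj B e) x y)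
    {c : α} (hc : c ∈ link B e) (hcT : c ∈ T)
    (hT : ∀ τ ∈ star B e, ∀ x ∈ τ \ e, x ∈ T → τ \ e ⊆ T) : link B e ⊆ T := by
  intro y hy
  have hcy := hconn c hc y hy
  clear hy
  induction hcy with
  | refl => exact hcT
  | tail _ hxy ih =>
    obtain ⟨-, τ, hτ, hx, hy⟩ := hxy
    exact hT τ hτ _ hx ih hy

lemma eq_of_card_star_eq_one {τ σ : Finset α} (h : (star B s).card = 1) (hτ : τ ∈ star B s)
    (hσ : σ ∈ star B s) : τ = σ :=
  card_le_one.1 h.le τ hτ σ hσ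

lemma notMem_of_card_star_insert_eq_one {c : α} {τ σ : Finset α}
    (hc : (star B (insert c s)).card = 1) (hτ : τ ∈ B) (hσ : σ ∈ B) (hcτ : insert c s ⊆ τ)
    (hsσ : s ⊆ σ) (hne : τ ≠ σ) : c ∉ σ := fun hcσ =>
  hne (eq_of_card_star_eq_one hc (mem_star.2 ⟨hτ, hcτ⟩) (mem_star.2 ⟨hσ, insert_subset hcσ hsσ⟩))

lemma exists_mem_of_card_star_eq_one (h : (star B s).card = 1) : ∃ τ ∈ B, s ⊆ τ := by
  obtain ⟨τ, hτ⟩ := card_pos.1 (h ▸ one_pos)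
  exact ⟨τ, mem_star.1 hτ⟩

lemma notMem_of_card_star_eq_one {x : α} (h : (star B s).card = 1) (hx : ∀ τ ∈ B, x ∉ τ) :
    x ∉ s := by
  obtain ⟨τ, hτ, hsτ⟩ := exists_mem_of_card_star_eq_one h
  exact fun hxs => hx τ hτ (hsτ hxs)

lemma star_eq_empty_of_mem {x : α} (hx : ∀ τ ∈ B, x ∉ τ) (hxs : x ∈ s) : star B s = ∅ :=
  filter_eq_empty_iff.2 fun τ hτ hsτ => hx τ hτ (hsτ hxs)

/-- The link of `e`, with one edge `τ \ e` for each tetrahedron `τ` of the star, is connected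
and has one more vertex than edges, i.e. it is a tree; and some triangle through `e` is a
boundary triangle. -/
structure IsTreeLink (B : Finset (Finset α)) (e : Finset α) : Prop where
  card_link : (link B e).card = (star B e).card + 1
  connected : ∀ x ∈ link B e, ∀ y ∈ link B e, Relation.ReflTransGen (LinkAdj B e) x y
  exists_boundary : ∃ p ∉ e, (star B (insert p e)).card = 1

lemma isTreeLink_of_star_eq_singleton {τ : Finset α} (hτ : τ.card = 4) (he : e.card = 2)
    (h : star B e = {τ}) : IsTreeLink B e := by
  have heτ : e ⊆ τ := (mem_star.1 (h ▸ mem_singleton_self τ)).2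
  have hlink : link B e = τ \ e := by simp [link, h]
  have hcard : (τ \ e).card = 2 := by rw [card_sdiff_of_subset heτ, hτ, he]
  refine ⟨by rw [hlink, hcard, h, card_singleton], fun x hx y hy => ?_, ?_⟩
  · rw [hlink] at hx hy
    by_cases hxy : x = y
    · rw [hxy]
    · exact .single ⟨hxy, τ, h ▸ mem_singleton_self τ, hx, hy⟩
  · obtain ⟨p, hp⟩ := card_pos.1 (hcard ▸ two_pos)
    refine ⟨p, (mem_sdiff.1 hp).2, card_eq_one.2 ⟨τ, eq_singleton_iff_unique_mem.2 ⟨?_, ?_⟩⟩⟩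
    · exact mem_star.2 ⟨(mem_star.1 (h ▸ mem_singleton_self τ)).1,
        insert_subset (mem_sdiff.1 hp).1 heτ⟩
    · exact fun σ hσ => mem_singleton.1 (h ▸ star_anti (subset_insert p e) hσ)

lemma IsTreeLink.of_star_eq {B' : Finset (Finset α)} (hL : IsTreeLink B e)
    (h : ∀ s, e ⊆ s → star B' s = star B s) : IsTreeLink B' e := by
  have hlink : link B' e = link B e := by rw [link, link, h e subset_rfl]
  have hadj : LinkAdj B' e = LinkAdj B e := by
    funext x y; rw [LinkAdj, LinkAdj, h e subset_rfl]
  obtain ⟨p, hp, hp1⟩ := hL.exists_boundary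
  exact ⟨by rw [hlink, h e subset_rfl, hL.card_link], hlink ▸ hadj ▸ hL.connected,
    ⟨p, hp, by rw [h _ (subset_insert p e), hp1]⟩⟩

lemma IsTreeLink.glue {x w : α} (hL : IsTreeLink B e) (hx : ∀ τ ∈ B, x ∉ τ) (hw : w ∉ e)
    (hbd : (star B (insert w e)).card = 1) :
    IsTreeLink (insert (insert x (insert w e)) B) e := by
  set σ := insert x (insert w e)
  have hxwe : x ∉ insert w e := notMem_of_card_star_eq_one hbd hx
  have hxe : x ∉ e := fun h => hxwe (mem_insert_of_mem h)
  have hxw : x ≠ w := fun h => hxwe (h ▸ mem_insert_self w e)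
  have hσB : σ ∉ B := fun h => hx σ h (mem_insert_self _ _)
  have hstar : star (insert σ B) e = insert σ (star B e) :=
    star_insert_of_subset ((subset_insert w e).trans (subset_insert x _))
  have hwL : w ∈ link B e := by
    obtain ⟨τ, hτ, hwτ⟩ := exists_mem_of_card_star_eq_one hbd
    exact mem_link.2 ⟨hw, τ, hτ, hwτ⟩
  have hxL : x ∉ link B e := fun h => by
    obtain ⟨-, τ, hτ, hxτ⟩ := mem_link.1 h
    exact hx τ hτ (hxτ (mem_insert_self x e))
  have hσe : σ \ e = {x, w} := by
    rw [insert_sdiff_of_notMem _ hxe, insert_sdiff_of_notMem _ hw, sdiff_self, bot_eq_empty,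
      insert_empty]
  have hlink : link (insert σ B) e = insert x (link B e) := by
    rw [link, hstar, biUnion_insert, ← link, hσe, insert_union, singleton_union,
      insert_eq_of_mem hwL]
  have hmono : LinkAdj B e ≤ LinkAdj (insert σ B) e := fun y z ⟨hyz, τ, hτ, hy, hz⟩ =>
    ⟨hyz, τ, hstar ▸ mem_insert_of_mem hτ, hy, hz⟩
  have hσ : σ ∈ star (insert σ B) e := hstar ▸ mem_insert_self σ _
  have hxσ : x ∈ σ \ e := by rw [hσe]; exact mem_insert_self x _
  have hwσ : w ∈ σ \ e := by rw [hσe]; exact mem_insert_of_mem (mem_singleton_self w)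
  refine ⟨?_, ?_, ⟨x, hxe, ?_⟩⟩
  · rw [hlink, card_insert_of_notMem hxL, hL.card_link, hstar,
      card_insert_of_notMem fun h => hσB (mem_star.1 h).1]
  · rw [hlink]
    exact reflTransGen_of_mem_insert
      (fun y hy z hz => Relation.ReflTransGen.mono hmono _ _ (hL.connected y hy z hz)) hwL
      ⟨hxw, σ, hσ, hxσ, hwσ⟩ ⟨hxw.symm, σ, hσ, hwσ, hxσ⟩
  · rw [star_insert_of_subset (insert_subset_insert x (subset_insert w e)),
      star_eq_empty_of_mem hx (mem_insert_self x e), insert_empty, card_singleton]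

end Link

section StackedBall

variable {B : Finset (Finset (Fin n))}

lemma IsStackedBall.card_eq_four (hB : IsStackedBall B) : ∀ τ ∈ B, τ.card = 4 := by
  induction hB with
  | single t ht => simpa using ht
  | glue B t x _ ht hbd hx ih =>
    intro τ hτ
    rcases mem_insert.1 hτ with rfl | hτ
    · rw [card_insert_of_notMem (notMem_of_card_star_eq_one hbd hx), ht]
    · exact ih τ hτ

lemma IsStackedBall.exists_superset_of_pairwise (hB : IsStackedBall B) {s : Finset (Fin n)}
    (hs : ∀ u ∈ s, ∀ v ∈ s, ∃ τ ∈ B, u ∈ τ ∧ v ∈ τ) : ∃ τ ∈ B, s ⊆ τ := by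
  induction hB generalizing s with
  | single t _ =>
    refine ⟨t, mem_singleton_self t, fun u hu => ?_⟩
    obtain ⟨τ, hτ, huτ, -⟩ := hs u hu u hu
    rwa [mem_singleton.1 hτ] at huτ
  | glue B t x _ _ hbd hx ih =>
    by_cases hxs : x ∈ s
    · refine ⟨insert x t, mem_insert_self _ _, fun u hu => ?_⟩
      obtain ⟨τ, hτ, hxτ, huτ⟩ := hs x hxs u hu
      rcases mem_insert.1 hτ with rfl | hτ
      · exact huτ
      · exact absurd hxτ (hx τ hτ)
    · obtain ⟨τ₁, hτ₁, htτ₁⟩ := exists_mem_of_card_star_eq_one hbd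
      obtain ⟨τ, hτ, hsτ⟩ := ih fun u hu v hv => by
        obtain ⟨τ, hτ, huτ, hvτ⟩ := hs u hu v hv
        rcases mem_insert.1 hτ with rfl | hτ
        · have hu' := (mem_insert.1 huτ).resolve_left fun h => hxs (h ▸ hu)
          have hv' := (mem_insert.1 hvτ).resolve_left fun h => hxs (h ▸ hv)
          exact ⟨τ₁, hτ₁, htτ₁ hu', htτ₁ hv'⟩
        · exact ⟨τ, hτ, huτ, hvτ⟩
      exact ⟨τ, mem_insert_of_mem hτ, hsτ⟩

lemma IsStackedBall.card_star_le_two (hB : IsStackedBall B) {s : Finset (Fin n)}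
    (hs : s.card = 3) : (star B s).card ≤ 2 := by
  induction hB with
  | single t _ => exact (card_filter_le _ _).trans (by simp)
  | glue B t x _ ht hbd hx ih =>
    by_cases hsσ : s ⊆ insert x t
    · rw [star_insert_of_subset hsσ]
      refine (card_insert_le _ _).trans (Nat.succ_le_succ ?_)
      by_cases hxs : x ∈ s
      · simp [star_eq_empty_of_mem hx hxs]
      · have hst : s ⊆ t := (subset_insert_iff_of_notMem hxs).1 hsσ
        rw [eq_of_subset_of_card_le hst (by rw [ht, hs])]
        exact hbd.le
    · rwa [star_insert_of_not_subset hsσ]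

lemma IsStackedBall.isTreeLink (hB : IsStackedBall B) {e : Finset (Fin n)} (he : e.card = 2)
    (hne : (star B e).Nonempty) : IsTreeLink B e := by
  induction hB with
  | single t ht =>
    exact isTreeLink_of_star_eq_singleton ht he
      ((Nonempty.subset_singleton_iff hne).1 (filter_subset _ _))
  | glue B t x hB' ht hbd hx ih =>
    have hB'' := IsStackedBall.glue B t x hB' ht hbd hx
    by_cases heσ : e ⊆ insert x t
    · by_cases hxe : x ∈ e
      · refine isTreeLink_of_star_eq_singleton (hB''.card_eq_four _ (mem_insert_self _ _)) he ?_
        rw [star_insert_of_subset heσ, star_eq_empty_of_mem hx hxe, insert_empty]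
      · have het : e ⊆ t := (subset_insert_iff_of_notMem hxe).1 heσ
        obtain ⟨τ₁, hτ₁, htτ₁⟩ := exists_mem_of_card_star_eq_one hbd
        obtain ⟨w, hw⟩ := card_eq_one.1 (show (t \ e).card = 1 by
          rw [card_sdiff_of_subset het, ht, he])
        have hwe : w ∉ e := (mem_sdiff.1 (hw ▸ mem_singleton_self w)).2
        obtain rfl : t = insert w e := by
          rw [← sdiff_union_of_subset het, hw, singleton_union]
        exact (ih ⟨τ₁, mem_star.2 ⟨hτ₁, het.trans htτ₁⟩⟩).glue hx hwe hbd
    · have hstar (s : Finset (Fin n)) (hs : e ⊆ s) : star (insert (insert x t) B) s = star B s :=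
        star_insert_of_not_subset fun h => heσ (hs.trans h)
      exact (ih (hstar e subset_rfl ▸ hne)).of_star_eq hstar

lemma mem_bdry {s : Finset (Fin n)} : s ∈ bdry B ↔ s.card = 3 ∧ (star B s).card = 1 := by
  refine ⟨fun h => ?_, fun ⟨hs, h1⟩ => ?_⟩
  · obtain ⟨hmem, h1⟩ := mem_filter.1 h
    obtain ⟨τ, -, hsτ⟩ := mem_biUnion.1 hmem
    exact ⟨(mem_powersetCard.1 hsτ).2, h1⟩
  · obtain ⟨τ, hτ, hsτ⟩ := exists_mem_of_card_star_eq_one h1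
    exact mem_filter.2 ⟨mem_biUnion.2 ⟨τ, hτ, mem_powersetCard.2 ⟨hsτ, hs⟩⟩, h1⟩

end StackedBall

section Boundary

variable {S : Sphere2 n} {B : Finset (Finset (Fin n))}

lemma hasEdge_iff_of_eq_bdry (hB : IsStackedBall B) (hbd : S.faces = bdry B) {u v : Fin n} :
    S.HasEdge u v ↔ u ≠ v ∧ ∃ τ ∈ B, u ∈ τ ∧ v ∈ τ := by
  refine ⟨fun ⟨huv, h⟩ => ⟨huv, ?_⟩, fun ⟨huv, τ, hτ, hu, hv⟩ => ⟨huv, ?_⟩⟩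
  · obtain ⟨f, hf, huvf⟩ := mem_biUnion.1 h
    obtain ⟨τ, hτ, hfτ⟩ := exists_mem_of_card_star_eq_one (mem_bdry.1 (hbd ▸ hf)).2
    have huvτ := (mem_powersetCard.1 huvf).1.trans hfτ
    exact ⟨τ, hτ, huvτ (mem_insert_self u _), huvτ (mem_insert_of_mem (mem_singleton_self v))⟩
  · have he : ({u, v} : Finset (Fin n)).card = 2 := card_pair huv
    have hstar : τ ∈ star B {u, v} := mem_star.2 ⟨hτ, insert_subset hu (singleton_subset_iff.2 hv)⟩
    obtain ⟨p, hp, hp1⟩ := (hB.isTreeLink he ⟨τ, hstar⟩).exists_boundary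
    have hf : insert p {u, v} ∈ bdry B := mem_bdry.2 ⟨by rw [card_insert_of_notMem hp, he], hp1⟩
    exact mem_biUnion.2 ⟨_, hbd ▸ hf, mem_powersetCard.2 ⟨subset_insert _ _, he⟩⟩

lemma filter_hasEdge_hasEdge_eq_link (hB : IsStackedBall B) (hbd : S.faces = bdry B)
    {a b : Fin n} {τ : Finset (Fin n)} (hτ : τ ∈ B) (habτ : {a, b} ⊆ τ) :
    (univ.filter fun x => S.HasEdge a x ∧ S.HasEdge b x) = link B {a, b} := by
  ext x
  simp only [mem_filter, mem_univ, true_and, hasEdge_iff_of_eq_bdry hB hbd, mem_link,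
    mem_insert, mem_singleton, not_or]
  constructor
  · rintro ⟨⟨hax, τa, hτa, haτa, hxτa⟩, hbx, τb, hτb, hbτb, hxτb⟩
    refine ⟨⟨Ne.symm hax, Ne.symm hbx⟩, hB.exists_superset_of_pairwise fun u hu v hv => ?_⟩
    have haτ := habτ (mem_insert_self a _)
    have hbτ := habτ (mem_insert_of_mem (mem_singleton_self b))
    simp only [mem_insert, mem_singleton] at hu hv
    rcases hu with rfl | rfl | rfl <;> rcases hv with rfl | rfl | rfl <;>
      first
      | exact ⟨τ, hτ, by assumption, by assumption⟩
      | exact ⟨τa, hτa, by assumption, by assumption⟩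
      | exact ⟨τb, hτb, by assumption, by assumption⟩
  · rintro ⟨⟨hxa, hxb⟩, σ, hσ, hxabσ⟩
    have hmem : ∀ y ∈ ({x, a, b} : Finset (Fin n)), y ∈ σ := fun y hy => hxabσ hy
    simp only [mem_insert, mem_singleton, forall_eq_or_imp, forall_eq] at hmem
    exact ⟨⟨Ne.symm hxa, σ, hσ, hmem.2.1, hmem.1⟩, Ne.symm hxb, σ, hσ, hmem.2.2, hmem.1⟩

end Boundary

section EdgeOfDegreeTwo

variable {B : Finset (Finset (Fin n))} {e : Finset (Fin n)} {c d : Fin n}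
  {tα tβ : Finset (Fin n)}

lemma IsStackedBall.eq_or_eq_of_insert_subset (hB : IsStackedBall B) (he : e.card = 2)
    (hc : (star B (insert c e)).card = 1) (htα : tα ∈ B) (htβ : tβ ∈ B)
    (hcα : insert c e ⊆ tα) (heβ : e ⊆ tβ) (hne : tα ≠ tβ) (hcap : (tα ∩ tβ).card = 3)
    {τ : Finset (Fin n)} (hτ : τ ∈ B) {x : Fin n} (hx : x ∈ tα \ e) (hxτ : insert x e ⊆ τ) :
    τ = tα ∨ τ = tβ := by
  obtain ⟨hxα, hxe⟩ := mem_sdiff.1 hx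
  -- Either `insert x e` is the triangle `tα ∩ tβ`, or `x` is the vertex `c` of `tα` off `tβ`.
  by_cases hxβ : x ∈ tβ
  · have hpair : {tα, tβ} ⊆ star B (insert x e) :=
      insert_subset (mem_star.2 ⟨htα, insert_subset hxα ((subset_insert c e).trans hcα)⟩)
        (singleton_subset_iff.2 (mem_star.2 ⟨htβ, insert_subset hxβ heβ⟩))
    have hle := hB.card_star_le_two (s := insert x e) (by rw [card_insert_of_notMem hxe, he])
    have hstar := eq_of_subset_of_card_le hpair (hle.trans (card_pair hne).ge)
    have hτ' : τ ∈ star B (insert x e) := mem_star.2 ⟨hτ, hxτ⟩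
    rw [← hstar] at hτ'
    simpa using hτ'
  · have hcβ := notMem_of_card_star_insert_eq_one hc htα htβ hcα heβ hne
    obtain ⟨y, hy⟩ := card_eq_one.1 (show (tα \ tβ).card = 1 by
      rw [card_sdiff, inter_comm, hcap, hB.card_eq_four tα htα])
    have hxc : x = c := by
      have hx' : x ∈ tα \ tβ := mem_sdiff.2 ⟨hxα, hxβ⟩
      have hc' : c ∈ tα \ tβ := mem_sdiff.2 ⟨hcα (mem_insert_self c e), hcβ⟩
      rw [hy, mem_singleton] at hx' hc'
      rw [hx', hc']
    subst hxc
    exact .inl (eq_of_card_star_eq_one hc (mem_star.2 ⟨hτ, hxτ⟩) (mem_star.2 ⟨htα, hcα⟩))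

lemma IsStackedBall.star_eq_pair_of_card_inter_eq_three (hB : IsStackedBall B) (he : e.card = 2)
    (hc : (star B (insert c e)).card = 1) (hd : (star B (insert d e)).card = 1)
    (htα : tα ∈ B) (htβ : tβ ∈ B) (hcα : insert c e ⊆ tα) (hdβ : insert d e ⊆ tβ)
    (hne : tα ≠ tβ) (hcap : (tα ∩ tβ).card = 3) : star B e = {tα, tβ} := by
  have heα := (subset_insert c e).trans hcα
  have heβ := (subset_insert d e).trans hdβ
  have hcβ := notMem_of_card_star_insert_eq_one hc htα htβ hcα heβ hne
  have hce : c ∉ e := fun h => hcβ (heβ h)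
  have hL := hB.isTreeLink he ⟨tα, mem_star.2 ⟨htα, heα⟩⟩
  have hcT : c ∈ (tα ∪ tβ) \ e := mem_sdiff.2 ⟨mem_union_left _ (hcα (mem_insert_self c e)), hce⟩
  have hsub : link B e ⊆ (tα ∪ tβ) \ e :=
    link_subset_of_closed hL.connected (mem_link.2 ⟨hce, tα, htα, hcα⟩) hcT
      fun τ hτ x hx hxT => by
        obtain ⟨hτB, heτ⟩ := mem_star.1 hτ
        have hxτ := insert_subset (mem_sdiff.1 hx).1 heτ
        have hxe := (mem_sdiff.1 hx).2
        have key : τ = tα ∨ τ = tβ := by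
          rcases mem_union.1 (mem_sdiff.1 hxT).1 with hxα | hxβ
          · exact hB.eq_or_eq_of_insert_subset he hc htα htβ hcα heβ hne hcap hτB
              (mem_sdiff.2 ⟨hxα, hxe⟩) hxτ
          · exact (hB.eq_or_eq_of_insert_subset he hd htβ htα hdβ heα hne.symm
              (by rwa [inter_comm]) hτB (mem_sdiff.2 ⟨hxβ, hxe⟩) hxτ).symm
        rcases key with rfl | rfl
        exacts [sdiff_subset_sdiff subset_union_left subset_rfl,
          sdiff_subset_sdiff subset_union_right subset_rfl]
  have hunion := card_union_add_card_inter tα tβ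
  rw [hB.card_eq_four tα htα, hB.card_eq_four tβ htβ, hcap] at hunion
  have hcard := card_le_card hsub
  rw [hL.card_link, card_sdiff_of_subset (heα.trans subset_union_left), he] at hcard
  refine (eq_of_subset_of_card_le ?_ ?_).symm
  · exact insert_subset (mem_star.2 ⟨htα, heα⟩) (singleton_subset_iff.2 (mem_star.2 ⟨htβ, heβ⟩))
  · rw [card_pair hne]; omega

lemma IsStackedBall.card_inter_eq_three (hB : IsStackedBall B) (he : e.card = 2)
    (hk : (star B e).card = 2) {σ τ : Finset (Fin n)} (hσ : σ ∈ star B e) (hτ : τ ∈ star B e)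
    (hne : σ ≠ τ) : (σ ∩ τ).card = 3 := by
  have hstar : star B e = {σ, τ} :=
    (eq_of_subset_of_card_le (insert_subset hσ (singleton_subset_iff.2 hτ))
      (by rw [hk, card_pair hne])).symm
  have hL := (hB.isTreeLink he ⟨σ, hσ⟩).card_link
  rw [link_eq_of_star_eq_pair hstar, hk,
    card_sdiff_of_subset ((mem_star.1 hσ).2.trans subset_union_left), he] at hL
  have hunion := card_union_add_card_inter σ τ
  rw [hB.card_eq_four σ (mem_star.1 hσ).1, hB.card_eq_four τ (mem_star.1 hτ).1] at hunion
  omega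

lemma IsStackedBall.not_insert_insert_subset (hB : IsStackedBall B) (he : e.card = 2)
    (hk : (star B e).card = 2) (hc : (star B (insert c e)).card = 1)
    (hd : (star B (insert d e)).card = 1) (hcd : c ≠ d) {τ : Finset (Fin n)} (hτ : τ ∈ B) :
    ¬ insert c (insert d e) ⊆ τ := by
  intro hcdτ
  have hdτ := (subset_insert c _).trans hcdτ
  have heτ := (subset_insert d e).trans hdτ
  have hτe : τ ∈ star B e := mem_star.2 ⟨hτ, heτ⟩
  -- The other tetrahedron `σ` around `e` avoids `c` and `d`, so it meets `τ` only in `e`.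
  obtain ⟨σ, hσ, hστ⟩ := exists_mem_ne (hk ▸ one_lt_two) τ
  obtain ⟨hσB, heσ⟩ := mem_star.1 hσ
  have hcσ : c ∉ σ := notMem_of_card_star_insert_eq_one hc hτ hσB
    (insert_subset (hcdτ (mem_insert_self c _)) heτ) heσ hστ.symm
  have hdσ : d ∉ σ := notMem_of_card_star_insert_eq_one hd hτ hσB hdτ heσ hστ.symm
  have hsub : σ ∩ τ ⊆ τ \ {c, d} := fun y hy => by
    obtain ⟨hyσ, hyτ⟩ := mem_inter.1 hy
    simp only [mem_sdiff, mem_insert, mem_singleton, not_or]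
    exact ⟨hyτ, fun h => hcσ (h ▸ hyσ), fun h => hdσ (h ▸ hyσ)⟩
  have hcdτ' : {c, d} ⊆ τ := insert_subset (hcdτ (mem_insert_self c _))
    (singleton_subset_iff.2 (hdτ (mem_insert_self d e)))
  have hcard := card_le_card hsub
  rw [hB.card_inter_eq_three he hk hσ hτe hστ, card_sdiff_of_subset hcdτ', hB.card_eq_four τ hτ,
    card_pair hcd] at hcard
  omega

lemma IsStackedBall.adjacent_iff_card_star_eq_two (hB : IsStackedBall B) (he : e.card = 2)
    (hc : (star B (insert c e)).card = 1) (hd : (star B (insert d e)).card = 1) (hcd : c ≠ d)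
    (htα : tα ∈ B) (htβ : tβ ∈ B) (hcα : insert c e ⊆ tα) (hdβ : insert d e ⊆ tβ) :
    tα ≠ tβ ∧ (tα ∩ tβ).card = 3 ↔ (star B e).card = 2 := by
  refine ⟨fun ⟨hne, hcap⟩ => ?_, fun hk => ?_⟩
  · rw [hB.star_eq_pair_of_card_inter_eq_three he hc hd htα htβ hcα hdβ hne hcap, card_pair hne]
  · have hne : tα ≠ tβ := fun h => hB.not_insert_insert_subset he hk hc hd hcd htα
      (insert_subset (hcα (mem_insert_self c e)) (h ▸ hdβ))
    exact ⟨hne, hB.card_inter_eq_three he hk (mem_star.2 ⟨htα, (subset_insert c e).trans hcα⟩)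
      (mem_star.2 ⟨htβ, (subset_insert d e).trans hdβ⟩) hne⟩

lemma IsStackedBall.exists_link_eq_of_adjacent (hB : IsStackedBall B) (he : e.card = 2)
    (hc : (star B (insert c e)).card = 1) (hd : (star B (insert d e)).card = 1)
    (htα : tα ∈ B) (htβ : tβ ∈ B) (hcα : insert c e ⊆ tα) (hdβ : insert d e ⊆ tβ)
    (hne : tα ≠ tβ) (hcap : (tα ∩ tβ).card = 3) :
    ∃ m, m ∉ e ∧ m ≠ c ∧ m ≠ d ∧ link B e = {c, m, d} ∧
      (star B e).image (· \ e) = {{c, m}, {m, d}} := by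
  have heα := (subset_insert c e).trans hcα
  have heβ := (subset_insert d e).trans hdβ
  have hstar := hB.star_eq_pair_of_card_inter_eq_three he hc hd htα htβ hcα hdβ hne hcap
  obtain ⟨m, hme, hmc, hmd, hαm, hβm⟩ := exists_sdiff_eq_pair_of_card_inter_eq_three
    (hB.card_eq_four tα htα) (hB.card_eq_four tβ htβ) he heα heβ hcap
    (hcα (mem_insert_self c e)) (notMem_of_card_star_insert_eq_one hc htα htβ hcα heβ hne)
    (hdβ (mem_insert_self d e)) (notMem_of_card_star_insert_eq_one hd htβ htα hdβ heα hne.symm)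
  refine ⟨m, hme, hmc, hmd, ?_, ?_⟩
  · rw [link_eq_of_star_eq_pair hstar, union_sdiff_distrib, hαm, hβm, insert_union,
      singleton_union, insert_idem]
  · rw [hstar, image_insert, image_singleton, hαm, hβm]

end EdgeOfDegreeTwo

section PairLink

variable {B : Finset (Finset (Fin n))} {a b : Fin n}

lemma filter_exists_superset_eq_link :
    (univ.filter fun x : Fin n => x ≠ a ∧ x ≠ b ∧ ∃ τ ∈ B, ({a, b, x} : Finset (Fin n)) ⊆ τ) =
      link B {a, b} := by
  ext x
  simp only [mem_filter, mem_univ, true_and, mem_link, mem_insert, mem_singleton, not_or,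
    insert_subset_iff, singleton_subset_iff]
  constructor
  · rintro ⟨hxa, hxb, τ, hτ, ha, hb, hx⟩
    exact ⟨⟨hxa, hxb⟩, τ, hτ, hx, ha, hb⟩
  · rintro ⟨⟨hxa, hxb⟩, τ, hτ, hx, ha, hb⟩
    exact ⟨hxa, hxb, τ, hτ, ha, hb, hx⟩

lemma filter_powersetCard_two_eq_image (h4 : ∀ τ ∈ B, τ.card = 4)
    (he : ({a, b} : Finset (Fin n)).card = 2) :
    ((univ.powersetCard 2).filter fun p : Finset (Fin n) =>
        a ∉ p ∧ b ∉ p ∧ ∃ τ ∈ B, p ∪ {a, b} ⊆ τ) =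
      (star B {a, b}).image (· \ {a, b}) := by
  ext p
  simp only [mem_filter, mem_powersetCard, subset_univ, true_and, mem_image, mem_star]
  constructor
  · rintro ⟨hp, hap, hbp, τ, hτ, hpτ⟩
    have hdisj : Disjoint p {a, b} := by simp [hap, hbp]
    have hτp : p ∪ {a, b} = τ :=
      eq_of_subset_of_card_le hpτ (by rw [h4 τ hτ, card_union_of_disjoint hdisj, hp, he])
    exact ⟨τ, ⟨hτ, hτp ▸ subset_union_right⟩, by rw [← hτp, union_sdiff_cancel_right hdisj]⟩
  · rintro ⟨τ, ⟨hτ, habτ⟩, rfl⟩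
    refine ⟨by rw [card_sdiff_of_subset habτ, h4 τ hτ, he], by simp, by simp, τ, hτ, ?_⟩
    rw [sdiff_union_of_subset habτ]

end PairLink

theorem flip_adjacency_tfae_general (n : ℕ) (S : Sphere2 n)
    (a b c d : Fin n) (hcd : c ≠ d)
    (hα : ({a, b, c} : Finset (Fin n)) ∈ S.faces)
    (hβ : ({a, b, d} : Finset (Fin n)) ∈ S.faces)
    (B : Finset (Finset (Fin n))) (hB : IsStackedBall B)
    (hbd : S.faces = bdry B)
    (tα tβ : Finset (Fin n)) (htα : tα ∈ B) (htβ : tβ ∈ B)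
    (hαsub : ({a, b, c} : Finset (Fin n)) ⊆ tα)
    (hβsub : ({a, b, d} : Finset (Fin n)) ⊆ tβ) :
    [tα ≠ tβ ∧ (tα ∩ tβ).card = 3,
     ∃ e : Fin n, e ∉ ({a, b, c, d} : Finset (Fin n)) ∧
       ((Finset.univ : Finset (Fin n)).filter fun x : Fin n => x ≠ a ∧ x ≠ b ∧
           ∃ τ ∈ B, ({a, b, x} : Finset (Fin n)) ⊆ τ) = {c, e, d} ∧
       (((Finset.univ : Finset (Fin n)).powersetCard 2).filter fun p =>
           a ∉ p ∧ b ∉ p ∧ ∃ τ ∈ B, p ∪ {a, b} ⊆ τ) = {{c, e}, {e, d}},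
     (B.filter fun τ => ({a, b} : Finset (Fin n)) ⊆ τ).card = 2,
     ((Finset.univ : Finset (Fin n)).filter fun x : Fin n =>
         S.HasEdge a x ∧ S.HasEdge b x).card = 3,
     ∃! e : Fin n, e ≠ c ∧ e ≠ d ∧ S.HasEdge a e ∧ S.HasEdge b e].TFAE := by
  have htri (x : Fin n) : ({a, b, x} : Finset (Fin n)) = insert x {a, b} := by
    rw [pair_comm b x, insert_comm a x]
  rw [htri] at hα hβ hαsub hβsub
  obtain ⟨hc3, hc⟩ := mem_bdry.1 (hbd ▸ hα)
  obtain ⟨hd3, hd⟩ := mem_bdry.1 (hbd ▸ hβ)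
  obtain ⟨hce, he⟩ := notMem_and_card_eq_two_of_card_insert_eq_three hc3
  have hde := (notMem_and_card_eq_two_of_card_insert_eq_three hd3).1
  have heα := (subset_insert c _).trans hαsub
  have hcommon := filter_hasEdge_hasEdge_eq_link (S := S) hB hbd htα heα
  have hcL : c ∈ link B {a, b} := mem_link.2 ⟨hce, tα, htα, hαsub⟩
  have hdL : d ∈ link B {a, b} := mem_link.2 ⟨hde, tβ, htβ, hβsub⟩
  rw [filter_exists_superset_eq_link, filter_powersetCard_two_eq_image hB.card_eq_four he]
  tfae_have 1 ↔ 3 := hB.adjacent_iff_card_star_eq_two he hc hd hcd htα htβ hαsub hβsub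
  tfae_have 1 → 2 := fun ⟨hne, hcap⟩ => by
    obtain ⟨m, hme, hmc, hmd, hlink, hedges⟩ :=
      hB.exists_link_eq_of_adjacent he hc hd htα htβ hαsub hβsub hne hcap
    simp only [mem_insert, mem_singleton, not_or] at hme
    exact ⟨m, by simp [hme.1, hme.2, hmc, hmd], hlink, hedges⟩
  tfae_have 2 → 4 := fun ⟨m, hm, hlink, _⟩ => by
    simp only [mem_insert, mem_singleton, not_or] at hm
    rw [hcommon, hlink, card_insert_of_notMem (by simp [Ne.symm hm.2.2.1, hcd]),
      card_pair hm.2.2.2]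
  tfae_have 3 ↔ 4 := by
    change (star B _).card = 2 ↔ _
    rw [hcommon, (hB.isTreeLink he ⟨tα, mem_star.2 ⟨htα, heα⟩⟩).card_link]
    omega
  tfae_have 4 ↔ 5 := by
    rw [card_eq_three_iff_existsUnique (hcommon ▸ hcL) (hcommon ▸ hdL) hcd]
    simp only [mem_filter, mem_univ, true_and]
  tfae_finish

/-- For triangles `α = abc`, `β = abd` of a stacked 2-sphere
`S`, the following are equivalent: (1) `ᾱ` and `β̄` are adjacent in `Λ(S̄)`;
(2) the link of `ab` in `S̄` is a path of length two from `c` to `d`;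
(3) `ab` lies in exactly two tetrahedra of `S̄`; (4) `a` and `b` have exactly
three common neighbours in the edge graph of `S`; (5) there is a unique vertex
`e ∉ {c, d}` with `ae` and `be` edges of `S`. -/
theorem flip_adjacency_tfae (n : ℕ) (S : Sphere2 n) (hS : IsStacked S)
    (a b c d : Fin n) (hcd : c ≠ d)
    (hα : ({a, b, c} : Finset (Fin n)) ∈ S.faces)
    (hβ : ({a, b, d} : Finset (Fin n)) ∈ S.faces)
    (B : Finset (Finset (Fin n))) (hB : IsStackedBall B)
    (hbd : S.faces = bdry B)
    (tα tβ : Finset (Fin n)) (htα : tα ∈ B) (htβ : tβ ∈ B)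
    (hαsub : ({a, b, c} : Finset (Fin n)) ⊆ tα)
    (hβsub : ({a, b, d} : Finset (Fin n)) ⊆ tβ) :
    [tα ≠ tβ ∧ (tα ∩ tβ).card = 3,
     ∃ e : Fin n, e ∉ ({a, b, c, d} : Finset (Fin n)) ∧
       ((Finset.univ : Finset (Fin n)).filter fun x : Fin n => x ≠ a ∧ x ≠ b ∧
           ∃ τ ∈ B, ({a, b, x} : Finset (Fin n)) ⊆ τ) = {c, e, d} ∧
       (((Finset.univ : Finset (Fin n)).powersetCard 2).filter fun p =>
           a ∉ p ∧ b ∉ p ∧ ∃ τ ∈ B, p ∪ {a, b} ⊆ τ) = {{c, e}, {e, d}},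
     (B.filter fun τ => ({a, b} : Finset (Fin n)) ⊆ τ).card = 2,
     ((Finset.univ : Finset (Fin n)).filter fun x : Fin n =>
         S.HasEdge a x ∧ S.HasEdge b x).card = 3,
     ∃! e : Fin n, e ≠ c ∧ e ≠ d ∧ S.HasEdge a e ∧ S.HasEdge b e].TFAE :=
  flip_adjacency_tfae_general n S a b c d hcd hα hβ B hB hbd tα tβ htα htβ hαsub hβsub

end PachnerSpheres
end
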